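/- Let a₁, a₂, a₃ ∈ 𝔽[t] be nonzero polynomials and let f ∈ 𝔽[t] be a monic irreducible polynomial. Suppose that not all of v_f(a₁), v_f(a₂), v_f(a₃) have the same parity, and let i ≠ j be indices with v_f(aᵢ) ≡ v_f(aⱼ) (mod 2). Then the equation a₁x₁² + a₂x₂² + a₃x₃² = 0 has a nontrivial solution in the f-adic completion 𝔽_q(t)_(f) if and only if −aᵢaⱼ / f^(v_f(aᵢ)+v_f(aⱼ)) (which is a polynomial coprime to f) is a square modulo f. -/

import Mathlib

open Polynomial IsDedekindDomain

set_option synthInstance.maxHeartbeats 1000000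

noncomputable def primeOfIrreducible {F : Type*} [Field F] {f : F[X]}
    (hf : Irreducible f) : HeightOneSpectrum F[X] where
  asIdeal := Ideal.span {f}
  isPrime := (Ideal.span_singleton_prime hf.ne_zero).mpr hf.prime
  ne_bot := by simpa [Ideal.span_singleton_eq_bot] using hf.ne_zero

/-! Let `k` be the third index. In a nontrivial zero the term `aₖxₖ²` has valuation `-v_f(aₖ)`
plus an even integer, so by parity it can match neither of the other two terms; the ultrametric
inequality then forces the `i`- and `j`-terms to cancel to leading order. Thus `-aᵢ/aⱼ` is a
square up to an error of smaller valuation, hence a square by Hensel's lemma (a Newton iteration,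
`2` being an `f`-adic unit). Conversely a square root `s` of `-aᵢ/aⱼ` gives the zero
`xᵢ = 1, xⱼ = s, xₖ = 0`. Finally `-aᵢ/aⱼ` is `-aᵢaⱼ/f^(v_f(aᵢ)+v_f(aⱼ))` times a square, and a
polynomial prime to `f` is a square in the completion iff it is a square modulo `f`: one way by
Hensel's lemma, the other by approximating the square root by a polynomial. -/

open Filter Topology
open scoped WithZero

theorem Fin.exists_ne_and_ne : ∀ i j : Fin 3, ∃ k, i ≠ k ∧ j ≠ k := by decide

theorem Fin.eq_or_eq_or_eq_of_ne {i j k : Fin 3} (hij : i ≠ j) (hik : i ≠ k) (hjk : j ≠ k)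
    (m : Fin 3) : m = i ∨ m = j ∨ m = k := by
  revert i j k m; decide

theorem isSquare_mul_sq_iff {K : Type*} [Field K] {x y : K} (hy : y ≠ 0) :
    IsSquare (x * y ^ 2) ↔ IsSquare x := by
  refine ⟨fun ⟨r, hr⟩ => ⟨r / y, ?_⟩, fun h => h.mul (IsSquare.sq y)⟩
  field_simp
  linear_combination hr

theorem EuclideanDomain.not_dvd_div_pow_multiplicity {R : Type*} [EuclideanDomain R] {p x : R}
    (hp : Prime p) (hx : x ≠ 0) : ¬p ∣ x / p ^ multiplicity p x := fun h =>
  (FiniteMultiplicity.of_prime_left hp hx).not_pow_dvd_of_multiplicity_lt (lt_add_one _) <| by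
    have := mul_dvd_mul_left (p ^ multiplicity p x) h
    rwa [EuclideanDomain.mul_div_cancel' (pow_ne_zero _ hp.ne_zero) (pow_multiplicity_dvd p x),
      ← pow_succ] at this

namespace Valuation

variable {K : Type*} [Field K]

theorem map_mul_sq_ne_map_mul_sq (v : Valuation K ℤᵐ⁰) {α γ : K} {m n : ℤ}
    (hα : v α = WithZero.exp m) (hγ : v γ = WithZero.exp n) (hmn : m % 2 ≠ n % 2) {x z : K}
    (hx : x ≠ 0) (hz : z ≠ 0) :
    v (α * x ^ 2) ≠ v (γ * z ^ 2) := by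
  rw [map_mul, map_mul, map_pow, map_pow, hα, hγ, ← WithZero.exp_log (v.ne_zero_iff.mpr hx),
    ← WithZero.exp_log (v.ne_zero_iff.mpr hz), ← WithZero.exp_nsmul, ← WithZero.exp_nsmul,
    ← WithZero.exp_add, ← WithZero.exp_add, Ne, WithZero.exp_inj, nsmul_eq_mul, nsmul_eq_mul]
  omega

variable {Γ₀ : Type*} [LinearOrderedCommGroupWithZero Γ₀] (v : Valuation K Γ₀)

theorem eq_zero_of_mul_sq_add_mul_sq_eq_zero {β γ : K} (hβ : β ≠ 0) (hγ : γ ≠ 0)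
    (hv : ∀ y z : K, y ≠ 0 → z ≠ 0 → v (β * y ^ 2) ≠ v (γ * z ^ 2)) {y z : K}
    (h : β * y ^ 2 + γ * z ^ 2 = 0) : y = 0 ∧ z = 0 := by
  by_contra hyz
  have hy : y ≠ 0 := by rintro rfl; simp_all
  have hz : z ≠ 0 := by rintro rfl; simp_all
  exact hv y z hy hz (by rw [eq_neg_of_add_eq_zero_left h, v.map_neg])

theorem exists_sq_add_div_lt_of_isotropic {α β γ : K} (hα : α ≠ 0) (hβ : β ≠ 0) (hγ : γ ≠ 0)
    (hαγ : ∀ x z : K, x ≠ 0 → z ≠ 0 → v (α * x ^ 2) ≠ v (γ * z ^ 2))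
    (hβγ : ∀ y z : K, y ≠ 0 → z ≠ 0 → v (β * y ^ 2) ≠ v (γ * z ^ 2)) {x y z : K}
    (hxyz : ¬(x = 0 ∧ y = 0 ∧ z = 0)) (h : α * x ^ 2 + β * y ^ 2 + γ * z ^ 2 = 0) :
    ∃ t : K, v (t ^ 2 + α / β) < v (α / β) := by
  have hx : x ≠ 0 := fun hx => hxyz ⟨hx,
    v.eq_zero_of_mul_sq_add_mul_sq_eq_zero hβ hγ hβγ (by simpa [hx] using h)⟩
  have hy : y ≠ 0 := fun hy => hxyz <| by
    obtain ⟨hx, hz⟩ := v.eq_zero_of_mul_sq_add_mul_sq_eq_zero hα hγ hαγ (by simpa [hy] using h)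
    exact ⟨hx, hy, hz⟩
  have hγz : v (γ * z ^ 2) < v (α * x ^ 2) := by
    have hαx : α * x ^ 2 ≠ 0 := mul_ne_zero hα (pow_ne_zero 2 hx)
    rcases eq_or_ne z 0 with rfl | hz
    · simpa [zero_lt_iff] using hαx
    have hsum : α * x ^ 2 + β * y ^ 2 = -(γ * z ^ 2) := by linear_combination h
    have hαβ : v (α * x ^ 2) = v (β * y ^ 2) := by
      by_contra hne
      have hmax := v.map_add_of_distinct_val hne
      rw [hsum, v.map_neg] at hmax
      rcases max_choice (v (α * x ^ 2)) (v (β * y ^ 2)) with hm | hm <;> rw [hm] at hmax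
      · exact hαγ x z hx hz hmax.symm
      · exact hβγ y z hy hz hmax.symm
    refine lt_of_le_of_ne ?_ (hαγ x z hx hz).symm
    rw [← v.map_neg, ← hsum]
    exact (v.map_add _ _).trans (by rw [← hαβ, max_self])
  refine ⟨y / x, ?_⟩
  have hβx : β * x ^ 2 ≠ 0 := mul_ne_zero hβ (pow_ne_zero 2 hx)
  have hsq : (y / x) ^ 2 + α / β = -(γ * z ^ 2) / (β * x ^ 2) := by
    field_simp
    linear_combination h
  rw [hsq, show α / β = α * x ^ 2 / (β * x ^ 2) by field_simp, map_div₀, map_div₀,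
    div_lt_div_iff_of_pos_right (zero_lt_iff.mpr (v.ne_zero_iff.mpr hβx)), v.map_neg]
  exact hγz

theorem newton_sqrt_step_le (h2 : v 2 = 1) {c s : K} {ε δ : Γ₀} (hs : v (s - 1) ≤ ε)
    (hδ : v (c - s ^ 2) ≤ δ) (hδε : δ ≤ ε) :
    v (s + (c - s ^ 2) / 2 - 1) ≤ ε ∧ v (c - (s + (c - s ^ 2) / 2) ^ 2) ≤ δ * ε := by
  have h2ne : (2 : K) ≠ 0 := fun h => by simp [h] at h2
  have hhalf : v ((c - s ^ 2) / 2) ≤ δ := by rwa [map_div₀, h2, div_one]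
  have hdefect : c - (s + (c - s ^ 2) / 2) ^ 2 = (c - s ^ 2) * (1 - s) - ((c - s ^ 2) / 2) ^ 2 := by
    field_simp; ring
  refine ⟨?_, ?_⟩
  · rw [add_sub_right_comm]
    exact v.map_add_le hs (hhalf.trans hδε)
  · rw [hdefect]
    refine v.map_sub_le ?_ ?_
    · rw [map_mul, v.map_sub_swap 1]
      exact mul_le_mul' hδ hs
    · rw [map_pow, sq]
      exact mul_le_mul' hhalf (hhalf.trans hδε)

end Valuation

namespace Valued

variable {K Γ₀ : Type*} [Field K] [LinearOrderedCommGroupWithZero Γ₀] [MulArchimedean Γ₀]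
  [Valued K Γ₀]

theorem eventually_pow_lt {ε : Γ₀} (hε : ε < 1)
    (γ : (MonoidWithZeroHom.ValueGroup₀ (.ofClass (v : Valuation K Γ₀)))ˣ) :
    ∀ᶠ n in atTop, ε ^ n < MonoidWithZeroHom.ValueGroup₀.embedding γ.1 := by
  obtain ⟨N, hN⟩ := exists_pow_lt₀ hε
    (Units.map (MonoidWithZeroHom.ValueGroup₀.embedding (f := .ofClass (v : Valuation K Γ₀))) γ)
  exact eventually_atTop.mpr ⟨N, fun n hn => (pow_le_pow_right_of_le_one' hε.le hn).trans_lt hN⟩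

theorem tendsto_zero_of_le_pow {x : ℕ → K} {ε : Γ₀} (hε : ε < 1) (hx : ∀ n, v (x n) ≤ ε ^ n) :
    Tendsto x atTop (𝓝 0) := by
  refine (hasBasis_nhds_zero K Γ₀).tendsto_right_iff.mpr fun γ _ => ?_
  filter_upwards [eventually_pow_lt hε γ] with n hn
  exact (Valuation.restrict_lt_iff_lt_embedding _).mpr ((hx n).trans_lt hn)

theorem cauchySeq_of_sub_le_pow {s : ℕ → K} {ε : Γ₀} (hε : ε < 1)
    (hs : ∀ n, v (s (n + 1) - s n) ≤ ε ^ n) : CauchySeq s := by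
  have hle : ∀ m n, m ≤ n → v (s n - s m) ≤ ε ^ m := by
    intro m n hmn
    induction n, hmn using Nat.le_induction with
    | base => simp
    | succ n hmn ih =>
      rw [← sub_add_sub_cancel]
      exact Valuation.map_add_le _ ((hs n).trans (pow_le_pow_right_of_le_one' hε.le hmn)) ih
  refine (hasBasis_uniformity K Γ₀).cauchySeq_iff.mpr fun γ _ => ?_
  obtain ⟨N, hN⟩ := eventually_atTop.mp (eventually_pow_lt hε γ)
  refine ⟨N, fun m hm n hn => (Valuation.restrict_lt_iff_lt_embedding _).mpr ?_⟩
  rcases le_total m n with h | h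
  · exact (hle m n h).trans_lt (hN m hm)
  · rw [Valuation.map_sub_swap]
    exact (hle n m h).trans_lt (hN n hn)

variable [CompleteSpace K]

/-- The iteration `s ↦ s + (c - s²) / 2` from `s = 1` converges to a square root of `c`: the
defect `c - s²` shrinks by a factor `v (c - 1)` at every step. -/
theorem isSquare_of_sub_one_lt_one (h2 : v (2 : K) = 1) {c : K} (hc : v (c - 1) < 1) :
    IsSquare c := by
  set ε := v (c - 1)
  let s : ℕ → K := fun n => Nat.rec 1 (fun _ s => s + (c - s ^ 2) / 2) n
  have hstep : ∀ n, s (n + 1) = s n + (c - s n ^ 2) / 2 := fun n => rfl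
  have hbound : ∀ n, v (s n - 1) ≤ ε ∧ v (c - s n ^ 2) ≤ ε ^ (n + 1) := by
    intro n
    induction n with
    | zero => simp [s, ε]
    | succ n ih =>
      rw [hstep, pow_succ ε (n + 1)]
      exact v.newton_sqrt_step_le h2 ih.1 ih.2 (pow_le_of_le_one zero_le hc.le (by omega))
  have hdefect : ∀ n, v (c - s n ^ 2) ≤ ε ^ n :=
    fun n => (hbound n).2.trans (pow_le_pow_right_of_le_one' hc.le n.le_succ)
  obtain ⟨w, hw⟩ := cauchySeq_tendsto_of_complete <| cauchySeq_of_sub_le_pow (s := s) hc fun n => by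
    rw [hstep, add_sub_cancel_left, map_div₀, h2, div_one]; exact hdefect n
  refine ⟨w, ?_⟩
  rw [← sub_eq_zero, ← pow_two]
  exact tendsto_nhds_unique (tendsto_const_nhds.sub (hw.pow 2)) (tendsto_zero_of_le_pow hc hdefect)

theorem isSquare_of_sq_sub_lt (h2 : v (2 : K) = 1) {c t : K} (h : v (t ^ 2 - c) < v c) :
    IsSquare c := by
  have hc : c ≠ 0 := by rintro rfl; simp at h
  have ht : v (t ^ 2) = v c := Valuation.map_eq_of_sub_lt _ h
  have ht0 : t ^ 2 ≠ 0 := by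
    rintro h0; rw [h0, map_zero, eq_comm, Valuation.zero_iff] at ht; exact hc ht
  obtain ⟨s, hs⟩ : IsSquare (c / t ^ 2) := by
    refine isSquare_of_sub_one_lt_one h2 ?_
    rwa [← div_self ht0, ← sub_div, map_div₀, Valuation.map_sub_swap, ht,
      div_lt_one₀ (zero_lt_iff.mpr (ht ▸ (Valuation.ne_zero_iff _).mpr ht0))]
  refine ⟨t * s, ?_⟩
  rw [div_eq_iff ht0] at hs
  rw [hs]; ring

theorem isotropic_iff_isSquare_neg_div (h2 : v (2 : K) = 1) {α : Fin 3 → K} (hα : ∀ m, α m ≠ 0)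
    {i j k : Fin 3} (hij : i ≠ j) (hik : i ≠ k) (hjk : j ≠ k)
    (hvik : ∀ x z : K, x ≠ 0 → z ≠ 0 → v (α i * x ^ 2) ≠ v (α k * z ^ 2))
    (hvjk : ∀ y z : K, y ≠ 0 → z ≠ 0 → v (α j * y ^ 2) ≠ v (α k * z ^ 2)) :
    (∃ x : Fin 3 → K, x ≠ 0 ∧ ∑ m, α m * x m ^ 2 = 0) ↔ IsSquare (-α i / α j) := by
  have hcover := Fin.eq_or_eq_or_eq_of_ne hij hik hjk
  have huniv : (Finset.univ : Finset (Fin 3)) = {i, j, k} :=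
    (Finset.eq_univ_of_forall fun m => by simpa using hcover m).symm
  have hsum : ∀ x : Fin 3 → K,
      ∑ m, α m * x m ^ 2 = α i * x i ^ 2 + α j * x j ^ 2 + α k * x k ^ 2 := fun x => by
    rw [huniv, Finset.sum_insert (by simp [hij, hik]), Finset.sum_pair hjk, add_assoc]
  constructor
  · rintro ⟨x, hx, hx0⟩
    have hxyz : ¬(x i = 0 ∧ x j = 0 ∧ x k = 0) := fun ⟨hi, hj, hk⟩ => hx <| funext fun m => by
      rcases hcover m with rfl | rfl | rfl <;> assumption
    obtain ⟨t, ht⟩ := v.exists_sq_add_div_lt_of_isotropic (hα i) (hα j) (hα k) hvik hvjk hxyz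
      (hsum x ▸ hx0)
    exact isSquare_of_sq_sub_lt h2 (t := t) (by rwa [neg_div, sub_neg_eq_add, Valuation.map_neg])
  · rintro ⟨s, hs⟩
    refine ⟨fun m => if m = i then 1 else if m = j then s else 0,
      fun h => by simpa using congrFun h i, ?_⟩
    rw [hsum]
    simp only [if_pos, if_neg hij.symm, if_neg hik.symm, if_neg hjk.symm]
    rw [div_eq_iff (hα j)] at hs
    linear_combination -hs

end Valued

namespace IsDedekindDomain.HeightOneSpectrum

variable {R K : Type*} [CommRing R] [IsDedekindDomain R] [Field K] [Algebra R K]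
  [IsFractionRing R K] (v : HeightOneSpectrum R)

theorem valued_algebraMap (r : R) :
    Valued.v (algebraMap R (v.adicCompletion K) r) = v.intValuation r := by
  rw [valuedAdicCompletion_eq_valuation, valuation_of_algebraMap]

theorem valued_algebraMap_lt_one_iff (r : R) :
    Valued.v (algebraMap R (v.adicCompletion K) r) < 1 ↔ r ∈ v.asIdeal := by
  rw [valued_algebraMap, intValuation_lt_one_iff_mem]

theorem valued_algebraMap_eq_one_iff (r : R) :
    Valued.v (algebraMap R (v.adicCompletion K) r) = 1 ↔ r ∉ v.asIdeal := by
  rw [valued_algebraMap, intValuation_eq_one_iff]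

theorem valued_algebraMap_eq_exp [IsPrincipalIdealRing R] {π r : R}
    (hv : v.asIdeal = Ideal.span {π}) (hr : r ≠ 0) :
    Valued.v (algebraMap R (v.adicCompletion K) r) = WithZero.exp (-(multiplicity π r : ℤ)) := by
  rw [valued_algebraMap, intValuation_eq_exp_neg_multiplicity v hr, hv,
    multiplicity_eq_of_emultiplicity_eq Ideal.emultiplicity_eq_emultiplicity_span]

theorem valued_algebraMap_of_field (y : K) :
    Valued.v (algebraMap K (v.adicCompletion K) y) = v.valuation K y :=
  valuedAdicCompletion_eq_valuation' v y

theorem algebraMap_ne_zero {r : R} (hr : r ≠ 0) : algebraMap R (v.adicCompletion K) r ≠ 0 :=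
  fun h => intValuation_ne_zero v r hr (by rw [← valued_algebraMap (K := K), h, map_zero])

theorem valued_two (h2 : (2 : R) ∉ v.asIdeal) : Valued.v (2 : v.adicCompletion K) = 1 := by
  rwa [← map_ofNat (algebraMap R (v.adicCompletion K)) 2, valued_algebraMap_eq_one_iff]

theorem exists_sub_algebraMap_lt_one {x : v.adicCompletion K} (hx : Valued.v x ≤ 1) :
    ∃ r : R, Valued.v (x - algebraMap R (v.adicCompletion K) r) < 1 := by
  obtain ⟨y, hy⟩ := (denseRange_algebraMap K v).mem_nhds (s := {z | Valued.v (x - z) < 1})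
    (Valued.mem_nhds.mpr ⟨1, fun z hz => by
      rw [Set.mem_ofPred_eq, Valuation.map_sub_swap]
      simpa [Valuation.restrict_lt_iff_lt_embedding] using hz⟩)
  have hy1 : v.valuation K y ≤ 1 := by
    rw [← valued_algebraMap_of_field, ← sub_sub_cancel x (algebraMap K _ y)]
    exact Valuation.map_sub_le _ hx hy.le
  obtain ⟨r, hr⟩ := exists_valuation_sub_lt_of_integer v hy1 1
  refine ⟨r, ?_⟩
  rw [← sub_add_sub_cancel _ (algebraMap K (v.adicCompletion K) y),
    IsScalarTower.algebraMap_apply R K]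
  refine Valuation.map_add_lt _ hy ?_
  rw [← map_sub, valued_algebraMap_of_field, Valuation.map_sub_swap]
  exact hr

theorem isSquare_mk_of_isSquare_algebraMap {u : R}
    (h : IsSquare (algebraMap R (v.adicCompletion K) u)) :
    IsSquare (Ideal.Quotient.mk v.asIdeal u) := by
  obtain ⟨w, hw⟩ := h
  have hw1 : Valued.v w ≤ 1 := by
    have := (valued_algebraMap (K := K) v u).trans_le (intValuation_le_one v u)
    rw [hw, map_mul, ← sq] at this
    exact (pow_le_one_iff_of_nonneg zero_le two_ne_zero).mp this
  obtain ⟨r, hr⟩ := exists_sub_algebraMap_lt_one v hw1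
  refine ⟨Ideal.Quotient.mk v.asIdeal r, ?_⟩
  rw [← map_mul, Ideal.Quotient.eq, ← valued_algebraMap_lt_one_iff v (K := K)]
  have : algebraMap R (v.adicCompletion K) (u - r * r) =
      (w - algebraMap R _ r) * (w + algebraMap R _ r) := by
    rw [map_sub, map_mul, hw]; ring
  rw [this, map_mul]
  refine mul_lt_one_of_lt_of_le hr (Valuation.map_add_le _ hw1 ?_)
  exact (valued_algebraMap v r).trans_le (intValuation_le_one v r)

theorem isSquare_algebraMap_iff (h2 : (2 : R) ∉ v.asIdeal) {u : R} (hu : u ∉ v.asIdeal) :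
    IsSquare (algebraMap R (v.adicCompletion K) u) ↔ IsSquare (Ideal.Quotient.mk v.asIdeal u) := by
  refine ⟨isSquare_mk_of_isSquare_algebraMap v, fun ⟨z, hz⟩ => ?_⟩
  obtain ⟨r, rfl⟩ := Ideal.Quotient.mk_surjective z
  refine Valued.isSquare_of_sq_sub_lt (valued_two v h2) (t := algebraMap R _ r) ?_
  rw [(valued_algebraMap_eq_one_iff (K := K) v u).mpr hu, ← map_pow, ← map_sub,
    valued_algebraMap_lt_one_iff, ← Ideal.Quotient.eq, map_pow, hz, sq]

theorem isSquare_neg_div_iff (h2 : (2 : R) ∉ v.asIdeal) {a b d g : R} (hb : b ≠ 0) (hd : d ≠ 0)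
    (hg : -(a * b) = d ^ 2 * g) (hgv : g ∉ v.asIdeal) :
    IsSquare (-algebraMap R (v.adicCompletion K) a / algebraMap R (v.adicCompletion K) b) ↔
      IsSquare (Ideal.Quotient.mk v.asIdeal g) := by
  set A := algebraMap R (v.adicCompletion K)
  have hAg : -A a / A b = A g * (A d / A b) ^ 2 := by
    have := congrArg A hg
    rw [map_neg, map_mul, map_mul, map_pow] at this
    have hAb : A b ≠ 0 := algebraMap_ne_zero v hb
    field_simp
    linear_combination this
  rw [hAg, isSquare_mul_sq_iff (div_ne_zero (algebraMap_ne_zero v hd) (algebraMap_ne_zero v hb)),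
    isSquare_algebraMap_iff v h2 hgv]

end IsDedekindDomain.HeightOneSpectrum

theorem IsDedekindDomain.HeightOneSpectrum.isSquare_neg_div_iff_of_multiplicity
    {R K : Type*} [EuclideanDomain R] [Field K] [Algebra R K] [IsFractionRing R K]
    (v : HeightOneSpectrum R) {π : R} (hv : v.asIdeal = Ideal.span {π}) (h2 : (2 : R) ∉ v.asIdeal)
    {a b : R} (ha : a ≠ 0) (hb : b ≠ 0)
    (hpar : multiplicity π a % 2 = multiplicity π b % 2) :
    IsSquare (-algebraMap R (v.adicCompletion K) a / algebraMap R (v.adicCompletion K) b) ↔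
      IsSquare (Ideal.Quotient.mk v.asIdeal
        (-(a * b) / π ^ (multiplicity π a + multiplicity π b))) := by
  have hπ0 : π ≠ 0 := by rintro rfl; exact v.ne_bot (by simpa using hv)
  have hπ : Prime π := (Ideal.span_singleton_prime hπ0).mp (hv ▸ v.isPrime)
  have hmul : multiplicity π (-(a * b)) = multiplicity π a + multiplicity π b := by
    rw [multiplicity_neg, multiplicity_mul hπ
      (FiniteMultiplicity.of_prime_left hπ (mul_ne_zero ha hb))]
  obtain ⟨d, hd⟩ : ∃ d, multiplicity π a + multiplicity π b = 2 * d :=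
    ⟨(multiplicity π a + multiplicity π b) / 2, by omega⟩
  refine v.isSquare_neg_div_iff h2 hb (pow_ne_zero d hπ0) ?_ ?_
  · rw [← pow_mul', ← hd, ← hmul,
      EuclideanDomain.mul_div_cancel' (pow_ne_zero _ hπ0) (pow_multiplicity_dvd _ _)]
  · rw [← hmul, hv, Ideal.mem_span_singleton]
    exact EuclideanDomain.not_dvd_div_pow_multiplicity hπ (neg_ne_zero.mpr (mul_ne_zero ha hb))

theorem ternary_isotropic_iff_of_mixed_parity_general
    {F : Type*} [Field F] (hodd : ringChar F ≠ 2)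
    (a : Fin 3 → F[X]) (ha : ∀ m, a m ≠ 0)
    (f : F[X]) (hf : Irreducible f)
    (hnot : ¬ (multiplicity f (a 0) % 2 = multiplicity f (a 1) % 2 ∧
               multiplicity f (a 1) % 2 = multiplicity f (a 2) % 2))
    (i j : Fin 3) (hij : i ≠ j)
    (hpar : multiplicity f (a i) % 2 = multiplicity f (a j) % 2) :
    (∃ x : Fin 3 → (primeOfIrreducible hf).adicCompletion (RatFunc F),
        x ≠ 0 ∧
        ∑ m, algebraMap F[X] ((primeOfIrreducible hf).adicCompletion (RatFunc F)) (a m)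
            * x m ^ 2 = 0) ↔
      IsSquare (Ideal.Quotient.mk (Ideal.span {f})
        (-(a i * a j) / f ^ (multiplicity f (a i) + multiplicity f (a j)))) := by
  set v := primeOfIrreducible hf
  obtain ⟨k, hik, hjk⟩ := Fin.exists_ne_and_ne i j
  have hk : multiplicity f (a k) % 2 ≠ multiplicity f (a i) % 2 := fun hki => hnot <| by
    have he : ∀ m, multiplicity f (a m) % 2 = multiplicity f (a i) % 2 := fun m => by
      rcases Fin.eq_or_eq_or_eq_of_ne hij hik hjk m with rfl | rfl | rfl
      exacts [rfl, hpar.symm, hki]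
    exact ⟨(he 0).trans (he 1).symm, (he 1).trans (he 2).symm⟩
  have h2 : (2 : F[X]) ∉ v.asIdeal := fun h => hf.not_isUnit <| isUnit_of_dvd_unit
    (Ideal.mem_span_singleton.mp h) (isUnit_C.mpr (Ring.two_ne_zero hodd).isUnit)
  have hval : ∀ m, Valued.v (algebraMap F[X] (v.adicCompletion (RatFunc F)) (a m)) =
      WithZero.exp (-(multiplicity f (a m) : ℤ)) := fun m => v.valued_algebraMap_eq_exp rfl (ha m)
  rw [Valued.isotropic_iff_isSquare_neg_div (v.valued_two h2)
    (fun m => v.algebraMap_ne_zero (ha m)) hij hik hjk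
    (fun x z hx hz => Valuation.map_mul_sq_ne_map_mul_sq _ (hval i) (hval k) (by omega) hx hz)
    (fun y z hy hz => Valuation.map_mul_sq_ne_map_mul_sq _ (hval j) (hval k) (by omega) hy hz)]
  exact v.isSquare_neg_div_iff_of_multiplicity rfl h2 (ha i) (ha j) hpar

/-- if not all of `v_f(a₁), v_f(a₂), v_f(a₃)` have the same parity and
`v_f(aᵢ) ≡ v_f(aⱼ) (mod 2)` for indices `i ≠ j`, then `a₁x₁² + a₂x₂² + a₃x₃² = 0` has a
nontrivial solution in the `f`-adic completion of `𝔽_q(t)` if and only if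
`−aᵢaⱼ / f^(v_f(aᵢ)+v_f(aⱼ))` is a square modulo `f`. -/
theorem ternary_isotropic_iff_of_mixed_parity
    {F : Type*} [Field F] [Fintype F] (hodd : ringChar F ≠ 2)
    (a : Fin 3 → F[X]) (ha : ∀ m, a m ≠ 0)
    (f : F[X]) (hfm : f.Monic) (hf : Irreducible f)
    (hnot : ¬ (multiplicity f (a 0) % 2 = multiplicity f (a 1) % 2 ∧
               multiplicity f (a 1) % 2 = multiplicity f (a 2) % 2))
    (i j : Fin 3) (hij : i ≠ j)
    (hpar : multiplicity f (a i) % 2 = multiplicity f (a j) % 2) :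
    (∃ x : Fin 3 → (primeOfIrreducible hf).adicCompletion (RatFunc F),
        x ≠ 0 ∧
        ∑ m, algebraMap F[X] ((primeOfIrreducible hf).adicCompletion (RatFunc F)) (a m)
            * x m ^ 2 = 0) ↔
      IsSquare (Ideal.Quotient.mk (Ideal.span {f})
        (-(a i * a j) / f ^ (multiplicity f (a i) + multiplicity f (a j)))) :=
  ternary_isotropic_iff_of_mixed_parity_general hodd a ha f hf hnot i j hij hpar
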